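/- arXiv:1312.7820 — 3 statements merged into one kernel-verified Lean document; each statement's English description precedes it below -/
import Mathlib

section
/- Let v ∈ O₃⁺. Then v ∈ F₃ if and only if the F-expansion (iₙ)ₙ of v under the ordered fully subtractive algorithm takes the value 3 infinitely often. -/
open Matrix
open scoped Classical

noncomputable section

abbrev Z3 := Fin 3 → ℤ
abbrev R3 := Fin 3 → ℝ

/-- The inner product `⟨x, v⟩` of an integer vector with a real vector. -/
def dot3 (x : Z3) (v : R3) : ℝ := ∑ i, (x i : ℝ) * v i

/-- Two points of `ℤ³` are 2-adjacent if `‖x − y‖₁ = 1`. -/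
def adj3 (x y : Z3) : Prop := (∑ i, |x i - y i|) = 1

/-- A subset of `ℤ³` is 2-connected if it is nonempty and any two of its points are
joined by a finite chain of points of the set with consecutive points 2-adjacent. -/
def Connected3 (A : Set Z3) : Prop :=
  A.Nonempty ∧ ∀ x ∈ A, ∀ y ∈ A,
    Relation.ReflTransGen (fun a b => b ∈ A ∧ adj3 a b) x y

/-- The arithmetical discrete plane `P(v, ω)`. -/
def Plane (v : R3) (ω : ℝ) : Set Z3 := {x | 0 ≤ dot3 x v ∧ dot3 x v < ω}

/-- The connecting thickness `Ω(v)`. -/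
def omegaConn (v : R3) : ℝ := sInf {ω : ℝ | 0 ≤ ω ∧ Connected3 (Plane v ω)}

/-- `O₃⁺ = {v : 0 ≤ v₁ ≤ v₂ ≤ v₃}`. -/
def O3 : Set R3 := {v | 0 ≤ v 0 ∧ v 0 ≤ v 1 ∧ v 1 ≤ v 2}

/-- The ordered fully subtractive map. -/
def FS (v : R3) : R3 :=
  if v 0 ≤ v 1 - v 0 ∧ v 1 - v 0 ≤ v 2 - v 0 then ![v 0, v 1 - v 0, v 2 - v 0]
  else if v 1 - v 0 < v 0 ∧ v 0 ≤ v 2 - v 0 then ![v 1 - v 0, v 0, v 2 - v 0]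
  else ![v 1 - v 0, v 2 - v 0, v 0]

/-- `F₃ = {v ∈ O₃⁺ : v₁⁽ⁿ⁾ + v₂⁽ⁿ⁾ > v₃⁽ⁿ⁾ for all n}`. -/
def F3set : Set R3 :=
  {v | v ∈ O3 ∧ ∀ n : ℕ, (FS^[n] v) 2 < (FS^[n] v) 0 + (FS^[n] v) 1}

/-- Branch index of `F` at `v`: values `0, 1, 2` encode the branches labelled `1, 2, 3`. -/
def FSidx (v : R3) : Fin 3 :=
  if v 0 ≤ v 1 - v 0 ∧ v 1 - v 0 ≤ v 2 - v 0 then 0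
  else if v 1 - v 0 < v 0 ∧ v 0 ≤ v 2 - v 0 then 1
  else 2

/-- The matrices `M₁, M₂, M₃` of the fully subtractive algorithm. -/
def Mmat : Fin 3 → Matrix (Fin 3) (Fin 3) ℤ :=
  ![!![1,0,0; 1,1,0; 1,0,1], !![0,1,0; 1,1,0; 0,1,1], !![0,0,1; 1,0,1; 0,1,1]]

def e1 : Z3 := ![1,0,0]

/-- The product `M₁ ⋯ Mₙ` of the matrices associated with the F-expansion of `v`. -/
def prodM (v : R3) (n : ℕ) : Matrix (Fin 3) (Fin 3) ℤ :=
  ((List.range n).map (fun j => Mmat (FSidx (FS^[j] v)))).prod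

/-- The translation vector `((M₁⋯Mₙ)ᵀ)⁻¹ · e₁`. -/
def transVec (v : R3) (n : ℕ) : Z3 := ((prodM v n)ᵀ)⁻¹ *ᵥ e1

/-- The sequence `Tₙ` of subsets of `ℤ³`: `T₀ = {0}`, `T_{n+1} = Tₙ ∪ (Tₙ + ((M₁⋯Mₙ)ᵀ)⁻¹·e₁)`
(so that `T₁ = {0, e₁}`, the empty matrix product being the identity). -/
def Tseq (v : R3) : ℕ → Set Z3
  | 0 => {0}
  | n + 1 => Tseq v n ∪ ((fun x => x + transVec v n) '' Tseq v n)

/-!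
On the first two branches of `F` the excess `v₁ + v₂ − v₃` is unchanged while the largest
entry decreases by `v₁ ≥ v₁ + v₂ − v₃`; the third branch can only be taken when the excess is
positive. Hence a nonpositive excess persists and forbids the third branch forever, while a
positive excess without further third branches would drive the largest entry below `0`.
-/

def excess (v : R3) : ℝ := v 0 + v 1 - v 2

lemma mem_F3set_iff {v : R3} : v ∈ F3set ↔ v ∈ O3 ∧ ∀ n, 0 < excess (FS^[n] v) := by
  simp only [F3set, excess, Set.mem_ofPred_eq, sub_pos]

lemma FS_mem_O3 {v : R3} (hv : v ∈ O3) : FS v ∈ O3 := by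
  obtain ⟨h0, h1, h2⟩ := hv
  unfold FS
  split_ifs <;>
    simp only [O3, Set.mem_ofPred_eq, Matrix.cons_val_zero, Matrix.cons_val_one,
      Matrix.cons_val_two, Matrix.tail_cons, Matrix.head_cons] <;>
    grind

lemma iterate_FS_mem_O3 {v : R3} (hv : v ∈ O3) (n : ℕ) : FS^[n] v ∈ O3 := by
  induction n with
  | zero => exact hv
  | succ n ih => rw [Function.iterate_succ_apply']; exact FS_mem_O3 ih

lemma FS_two_of_FSidx_ne_two {v : R3} (h : FSidx v ≠ 2) : FS v 2 = v 2 - v 0 := by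
  unfold FS FSidx at *
  split_ifs at * <;> simp_all

lemma excess_FS_of_FSidx_ne_two {v : R3} (h : FSidx v ≠ 2) : excess (FS v) = excess v := by
  unfold excess FS FSidx at *
  split_ifs at * <;> simp_all <;> ring

lemma excess_pos_of_FSidx_eq_two {v : R3} (hv : v ∈ O3) (h : FSidx v = 2) : 0 < excess v := by
  obtain ⟨h0, h1, h2⟩ := hv
  unfold excess
  unfold FSidx at h
  split_ifs at h <;> first | exact absurd h (by decide) | grind

lemma excess_le_apply_zero {v : R3} (hv : v ∈ O3) : excess v ≤ v 0 := by
  unfold excess; linarith [hv.2.2]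

lemma excess_iterate_FS {w : R3} {m : ℕ} (h : ∀ k < m, FSidx (FS^[k] w) ≠ 2) :
    excess (FS^[m] w) = excess w := by
  induction m with
  | zero => rfl
  | succ m ih =>
    rw [Function.iterate_succ_apply', excess_FS_of_FSidx_ne_two (h m m.lt_succ_self),
      ih fun k hk => h k (hk.trans m.lt_succ_self)]

lemma iterate_FS_two_add_mul_excess_le {w : R3} (hw : w ∈ O3) {m : ℕ}
    (h : ∀ k < m, FSidx (FS^[k] w) ≠ 2) : FS^[m] w 2 + m * excess w ≤ w 2 := by
  induction m with
  | zero => simp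
  | succ m ih =>
    have h' : ∀ k < m, FSidx (FS^[k] w) ≠ 2 := fun k hk => h k (hk.trans m.lt_succ_self)
    have hdrop : excess w ≤ FS^[m] w 0 :=
      excess_iterate_FS h' ▸ excess_le_apply_zero (iterate_FS_mem_O3 hw m)
    rw [Function.iterate_succ_apply', FS_two_of_FSidx_ne_two (h m m.lt_succ_self)]
    push_cast
    linarith [ih h']

lemma exists_FSidx_iterate_eq_two {w : R3} (hw : w ∈ O3) (hpos : 0 < excess w) :
    ∃ k, FSidx (FS^[k] w) = 2 := by
  by_contra! h
  obtain ⟨m, hm⟩ := exists_nat_gt (w 2 / excess w)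
  have hle := iterate_FS_two_add_mul_excess_le hw (m := m) fun k _ => h k
  have hnonneg : 0 ≤ FS^[m] w 2 := by
    obtain ⟨h0, h1, h2⟩ := iterate_FS_mem_O3 hw m; linarith
  rw [div_lt_iff₀ hpos] at hm
  linarith

lemma FSidx_iterate_ne_two {w : R3} (hw : w ∈ O3) (hnonpos : excess w ≤ 0) (m : ℕ) :
    FSidx (FS^[m] w) ≠ 2 := by
  induction m using Nat.strong_induction_on with
  | _ m ih =>
    intro h
    have := excess_pos_of_FSidx_eq_two (iterate_FS_mem_O3 hw m) h
    rw [excess_iterate_FS ih] at this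
    linarith

/-- `v ∈ F₃` iff the F-expansion of `v` takes the value `3`
(encoded here by the branch index `2 : Fin 3`) infinitely often. -/
theorem mem_F3_iff_infinitely_many_threes (v : R3) (hv : v ∈ O3) :
    v ∈ F3set ↔ ∀ N : ℕ, ∃ n ≥ N, FSidx (FS^[n] v) = 2 := by
  rw [mem_F3set_iff, and_iff_right hv]
  constructor
  · intro hpos N
    obtain ⟨k, hk⟩ := exists_FSidx_iterate_eq_two (iterate_FS_mem_O3 hv N) (hpos N)
    exact ⟨k + N, N.le_add_left k, by rwa [Function.iterate_add_apply]⟩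
  · intro hthree n
    by_contra! hnonpos
    obtain ⟨m, hmn, hm⟩ := hthree n
    obtain ⟨k, rfl⟩ := Nat.exists_eq_add_of_le' hmn
    rw [Function.iterate_add_apply] at hm
    exact FSidx_iterate_ne_two (iterate_FS_mem_O3 hv n) hnonpos k hm

end
end

section
/- Let v ∈ F₃, let (Tₙ)ₙ be the associated sequence of subsets of ℤ³, and let 𝐏ₙ be the set of distinguished vertices of the pattern Pₙ = Σ_{i₁} ∘ ⋯ ∘ Σ_{iₙ}(U). Then 𝐏ₙ ⊆ Tₙ for every n ∈ ℕ. -/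
open Matrix
open scoped Classical

noncomputable section

/-- A unit face is a pair `(x, i)` of its distinguished vertex `x ∈ ℤ³` and
its type `i ∈ Fin 3` (encoding the types `1, 2, 3`). A pattern is a set of faces. -/
abbrev Face := Z3 × Fin 3

/-- The lower half unit cube `U = [0,1]* ∪ [0,2]* ∪ [0,3]*`. -/
def Uset : Set Face := {(0, 0), (0, 1), (0, 2)}

/-- Image of the face `[0, t]*` under the dual substitution `Σᵢ`. -/
def dualBase (i t : Fin 3) : Set Face :=
  if t = i then Uset
  else if (i = 0 ∧ t = 1) ∨ (i ≠ 0 ∧ t = 0) then {(e1, 1)}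
  else {(e1, 2)}

/-- Image of a face under the dual substitution `Σᵢ`:
`Σᵢ([x,t]*) = (Mᵢᵀ)⁻¹ x + Σᵢ([0,t]*)`. -/
def dualFace (i : Fin 3) (f : Face) : Set Face :=
  (fun g : Face => (((Mmat i)ᵀ)⁻¹ *ᵥ f.1 + g.1, g.2)) '' dualBase i f.2

/-- Dual substitution `Σᵢ` extended to patterns. -/
def dualPat (i : Fin 3) (P : Set Face) : Set Face := ⋃ f ∈ P, dualFace i f

/-- The translate of a pattern by `t ∈ ℤ³`. -/
def translatePat (t : Z3) (P : Set Face) : Set Face := (fun f : Face => (f.1 + t, f.2)) '' P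

/-- The stepped plane `Γ_w`. -/
def stepped (w : R3) : Set Face := {f | 0 ≤ dot3 f.1 w ∧ dot3 f.1 w < w f.2}

/-- The nine patterns of `L_FS` (base representatives, used up to translation). -/
def LFS : Set (Set Face) :=
  { {(0, 0), (0, 1)},
    {(0, 0), (![-1,1,0], 1)},
    {(0, 0), (0, 2)},
    {(0, 0), (![-1,0,1], 2)},
    {(0, 1), (0, 2)},
    {(0, 1), (![0,-1,1], 2)},
    {(0, 1), (![1,0,0], 1), (0, 2)},
    {(0, 2), (![1,0,0], 2), (0, 1)},
    {(0, 2), (![0,1,0], 2), (0, 0)} }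

/-- The twelve two-face edge-connected patterns (base representatives). -/
def Ledge : Set (Set Face) :=
  { {(0, 0), (0, 1)},
    {(0, 0), (![-1,1,0], 1)},
    {(0, 0), (0, 2)},
    {(0, 0), (![-1,0,1], 2)},
    {(0, 1), (0, 2)},
    {(0, 1), (![0,-1,1], 2)},
    {(0, 0), (![0,1,0], 0)},
    {(0, 0), (![0,0,1], 0)},
    {(0, 1), (![1,0,0], 1)},
    {(0, 1), (![0,0,1], 1)},
    {(0, 2), (![1,0,0], 2)},
    {(0, 2), (![0,1,0], 2)} }

/-- The four forbidden patterns
`[0,1]*∪[(0,1,0),1]*`, `[0,1]*∪[(0,0,1),1]*`, `[0,2]*∪[(0,0,1),2]*`, `[0,3]*∪[(1,1,0),3]*`. -/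
def Forbidden : Set (Set Face) :=
  { {(0, 0), (![0,1,0], 0)},
    {(0, 0), (![0,0,1], 0)},
    {(0, 1), (![0,0,1], 1)},
    {(0, 2), (![1,1,0], 2)} }

/-- A pattern `P` is `L`-covered if any two of its faces are joined by a chain of
translates of elements of `L`, all contained in `P`, with consecutive ones sharing a face. -/
def IsCovered (L : Set (Set Face)) (P : Set Face) : Prop :=
  ∀ e ∈ P, ∀ f ∈ P, ∃ n : ℕ, ∃ Q : Fin (n + 1) → Set Face,
    (∀ k, ∃ R ∈ L, ∃ t : Z3, Q k = translatePat t R) ∧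
    e ∈ Q 0 ∧ f ∈ Q (Fin.last n) ∧
    (∀ k, Q k ⊆ P) ∧
    (∀ k : Fin n, (Q k.castSucc ∩ Q k.succ).Nonempty)

/-- A pattern `P` is strongly `L`-covered if it is `L`-covered and every translate of an
element of `L_edge` contained in `P` is completed within `P` by a translate of an element of `L`. -/
def IsStronglyCovered (L : Set (Set Face)) (P : Set Face) : Prop :=
  IsCovered L P ∧
  ∀ X ∈ Ledge, ∀ t : Z3, translatePat t X ⊆ P →
    ∃ Y ∈ L, ∃ s : Z3, translatePat t X ⊆ translatePat s Y ∧ translatePat s Y ⊆ P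

/-- The geometric realization of a face in `ℝ³`. -/
def faceGeom (f : Face) : Set R3 :=
  {q | q f.2 = (f.1 f.2 : ℝ) ∧ ∀ j, j ≠ f.2 → (f.1 j : ℝ) ≤ q j ∧ q j ≤ (f.1 j : ℝ) + 1}

/-- The geometric realization of a pattern in `ℝ³`. -/
def patGeom (P : Set Face) : Set R3 := ⋃ f ∈ P, faceGeom f

/-- `A` is an `L_FS`-annulus of `P` in the stepped plane `Γ`. -/
def IsAnnulus (Γ P A : Set Face) : Prop :=
  IsCovered LFS P ∧ IsCovered LFS (A ∪ P) ∧ IsCovered LFS (Γ \ (A ∪ P)) ∧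
  IsStronglyCovered LFS A ∧
  A ∩ P = ∅ ∧
  patGeom P ∩ closure (patGeom (Γ \ (P ∪ A))) = ∅

/-- Apply a finite list of dual substitutions, the head being applied last:
`applySubs [i₁, …, iₙ] P = Σ_{i₁} ∘ ⋯ ∘ Σ_{iₙ}(P)`. -/
def applySubs : List (Fin 3) → Set Face → Set Face
  | [], P => P
  | i :: l, P => dualPat i (applySubs l P)

/-- The pattern `Pₙ = Σ_{i₁} ∘ ⋯ ∘ Σ_{iₙ}(U)` associated with the F-expansion of `v`. -/
def PatN (v : R3) (n : ℕ) : Set Face :=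
  applySubs ((List.range n).map (fun j => FSidx (FS^[j] v))) Uset

/-- The set `𝐏ₙ` of distinguished vertices of the faces of `Pₙ`. -/
def Pverts (v : R3) (n : ℕ) : Set Z3 := {x | ∃ t : Fin 3, (x, t) ∈ PatN v n}

/-
Both sides unfold from the front of the F-expansion. With `A = (M_{i₁}ᵀ)⁻¹`,
`P_{n+1}(v) = Σ_{i₁}(Pₙ(F v))`, and every face of `Σ_{i₁}([x,t]*)` has distinguished vertex
`A x` or `A x + e₁`. On the other side `((M₁⋯M_{k+1})ᵀ)⁻¹ e₁ = A ((M₂⋯M_{k+1})ᵀ)⁻¹ e₁`, so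
`A Tₙ(F v) + {0, e₁} ⊆ T_{n+1}(v)`. Induction on `n`, for all `v` at once, finishes the proof.
-/

lemma prodM_succ (v : R3) (n : ℕ) :
    prodM v (n + 1) = Mmat (FSidx v) * prodM (FS v) n := by
  unfold prodM
  rw [List.range_succ_eq_map, List.map_cons, List.prod_cons, List.map_map]
  rfl

lemma transVec_zero (v : R3) : transVec v 0 = e1 := by
  simp [transVec, prodM]

lemma transVec_succ (v : R3) (n : ℕ) :
    transVec v (n + 1) = ((Mmat (FSidx v))ᵀ)⁻¹ *ᵥ transVec (FS v) n := by
  rw [transVec, prodM_succ, transpose_mul, Matrix.mul_inv_rev, ← mulVec_mulVec, transVec]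

lemma mulVec_add_mem_Tseq_succ (v : R3) (n : ℕ) {y : Z3} (hy : y ∈ Tseq (FS v) n)
    {ε : Z3} (hε : ε ∈ ({0, e1} : Set Z3)) :
    ((Mmat (FSidx v))ᵀ)⁻¹ *ᵥ y + ε ∈ Tseq v (n + 1) := by
  induction n generalizing y with
  | zero =>
    obtain rfl : y = 0 := hy
    rcases hε with rfl | rfl
    · simp [Tseq]
    · exact Or.inr ⟨0, rfl, by simp [transVec_zero]⟩
  | succ n ih =>
    rcases hy with hy | ⟨z, hz, rfl⟩
    · exact Or.inl (ih hy)
    · refine Or.inr ⟨((Mmat (FSidx v))ᵀ)⁻¹ *ᵥ z + ε, ih hz, ?_⟩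
      rw [transVec_succ, mulVec_add, add_right_comm]

lemma fst_mem_of_mem_dualBase {i t : Fin 3} {g : Face} (hg : g ∈ dualBase i t) :
    g.1 ∈ ({0, e1} : Set Z3) := by
  unfold dualBase Uset at hg
  split_ifs at hg
  · rcases hg with rfl | rfl | rfl <;> exact Or.inl rfl
  all_goals (rw [hg]; exact Or.inr rfl)

lemma exists_eq_mulVec_add_of_mem_dualPat {i : Fin 3} {P : Set Face} {f : Face}
    (hf : f ∈ dualPat i P) :
    ∃ g ∈ P, ∃ ε ∈ ({0, e1} : Set Z3), f.1 = ((Mmat i)ᵀ)⁻¹ *ᵥ g.1 + ε := by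
  simp only [dualPat, dualFace, Set.mem_iUnion, Set.mem_image, exists_prop] at hf
  obtain ⟨g, hg, b, hb, rfl⟩ := hf
  exact ⟨g, hg, b.1, fst_mem_of_mem_dualBase hb, rfl⟩

lemma PatN_succ (v : R3) (n : ℕ) :
    PatN v (n + 1) = dualPat (FSidx v) (PatN (FS v) n) := by
  unfold PatN
  rw [List.range_succ_eq_map, List.map_cons, List.map_map]
  rfl

theorem Pverts_subset_Tseq_general (v : R3) (n : ℕ) :
    Pverts v n ⊆ Tseq v n := by
  induction n generalizing v with
  | zero =>
    rintro x ⟨t, ht⟩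
    rcases ht with h | h | h <;> exact (Prod.mk.inj h).1
  | succ n ih =>
    rintro x ⟨t, ht⟩
    rw [PatN_succ] at ht
    obtain ⟨g, hg, ε, hε, hx⟩ := exists_eq_mulVec_add_of_mem_dualPat ht
    rw [show x = _ from hx]
    exact mulVec_add_mem_Tseq_succ v n (ih (FS v) ⟨g.2, hg⟩) hε

/-- For `v ∈ F₃`, the set `𝐏ₙ` of distinguished vertices of
`Pₙ = Σ_{i₁} ∘ ⋯ ∘ Σ_{iₙ}(U)` is contained in `Tₙ`. -/
theorem Pverts_subset_Tseq (v : R3) (hv : v ∈ F3set) (n : ℕ) :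
    Pverts v n ⊆ Tseq v n :=
  Pverts_subset_Tseq_general v n
end
end

section
/- Let Γ = Γ_w be a stepped plane that contains no translate of any of the four forbidden patterns. Then for every i ∈ {1,2,3}, the stepped plane Σᵢ(Γ) contains no translate of any of the four forbidden patterns. -/
open Matrix
open scoped Classical

noncomputable section

/-!
Proof idea: the two faces of a forbidden pattern have heights differing by one coordinate of `w`
(or by `w₁ + w₂`), so for `w ≥ 0` the stepped plane `Γ_w` avoids all four patterns exactly when
`w₁ ≤ w₂ ≤ w₃ ≤ w₁ + w₂`, the witness being a translate at the origin. Each `Σᵢ` maps `Γ_w` into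
`Γ_{Mᵢ w}`, and `Mᵢ` (add `wᵢ` to the other two coordinates) preserves this cone.
-/

def triangleCone : Set R3 := {v | v 0 ≤ v 1 ∧ v 1 ≤ v 2 ∧ v 2 ≤ v 0 + v 1}

def MmatR (i : Fin 3) : Matrix (Fin 3) (Fin 3) ℝ := (Mmat i).map (↑)

lemma dot3_eq (x : Z3) (v : R3) : dot3 x v = x 0 * v 0 + x 1 * v 1 + x 2 * v 2 := by
  simp only [dot3, Fin.sum_univ_three]

lemma dot3_add (x y : Z3) (v : R3) : dot3 (x + y) v = dot3 x v + dot3 y v := by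
  simp only [dot3, Pi.add_apply, Int.cast_add, add_mul, Finset.sum_add_distrib]

lemma dot3_map_mulVec (A : Matrix (Fin 3) (Fin 3) ℤ) (x : Z3) (v : R3) :
    dot3 x (A.map (↑) *ᵥ v) = dot3 (Aᵀ *ᵥ x) v := by
  simp only [dot3, mulVec, dotProduct, map_apply, Fin.sum_univ_three, transpose_apply,
    Int.cast_add, Int.cast_mul]
  ring

lemma Mmat_transpose_mulVec_inv_mulVec (i : Fin 3) (x : Z3) :
    (Mmat i)ᵀ *ᵥ (((Mmat i)ᵀ)⁻¹ *ᵥ x) = x := by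
  have hdet : IsUnit ((Mmat i)ᵀ).det := by
    rw [Int.isUnit_iff]
    fin_cases i <;> decide
  rw [mulVec_mulVec, mul_nonsing_inv _ hdet, one_mulVec]

lemma MmatR_zero_mulVec (w : R3) : MmatR 0 *ᵥ w = ![w 0, w 0 + w 1, w 0 + w 2] := by
  ext j; fin_cases j <;> simp [MmatR, Mmat, mulVec, dotProduct, Fin.sum_univ_three]

lemma MmatR_one_mulVec (w : R3) : MmatR 1 *ᵥ w = ![w 1, w 0 + w 1, w 1 + w 2] := by
  ext j; fin_cases j <;> simp [MmatR, Mmat, mulVec, dotProduct, Fin.sum_univ_three]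

lemma MmatR_two_mulVec (w : R3) : MmatR 2 *ᵥ w = ![w 2, w 0 + w 2, w 1 + w 2] := by
  ext j; fin_cases j <;> simp [MmatR, Mmat, mulVec, dotProduct, Fin.sum_univ_three]

lemma dualBase_height_bounds {w : R3} (hw : ∀ j, 0 ≤ w j) {i t : Fin 3} {g : Face}
    (hg : g ∈ dualBase i t) :
    0 ≤ dot3 g.1 (MmatR i *ᵥ w) ∧ dot3 g.1 (MmatR i *ᵥ w) + w t ≤ (MmatR i *ᵥ w) g.2 := by
  fin_cases i <;> fin_cases t <;>
    simp only [dualBase, Uset, Set.mem_insert_iff, Set.mem_singleton_iff, Fin.isValue,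
      Fin.reduceEq, Fin.reduceFinMk, Fin.mk_one, Fin.zero_eta, ↓reduceIte, ne_eq, and_self,
      and_true, and_false, or_self, or_true, or_false, not_true_eq_false, not_false_eq_true,
      one_ne_zero, zero_ne_one] at hg <;>
    rcases hg with rfl | rfl | rfl <;>
    simp only [Fin.zero_eta, Fin.mk_one, Fin.reduceFinMk, MmatR_zero_mulVec, MmatR_one_mulVec,
      MmatR_two_mulVec, dot3_eq, e1, Pi.zero_apply,
      cons_val_zero, cons_val_one, cons_val_two, head_cons, tail_cons, Int.cast_zero,
      Int.cast_one, zero_mul, one_mul, add_zero, zero_add] <;>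
    and_intros <;> linarith [hw 0, hw 1, hw 2]

/-- With the convention `Σᵢ([x,t]*) = (Mᵢᵀ)⁻¹x + Σᵢ([0,t]*)`, the normal vector of the image plane
is `Mᵢ w` (not `Mᵢᵀ w`), since `⟨(Mᵢᵀ)⁻¹x, Mᵢ w⟩ = ⟨x, w⟩`. -/
theorem dualPat_stepped_subset {w : R3} (hw : ∀ j, 0 ≤ w j) (i : Fin 3) :
    dualPat i (stepped w) ⊆ stepped (MmatR i *ᵥ w) := by
  refine Set.iUnion₂_subset fun f hf => ?_
  rintro _ ⟨g, hg, rfl⟩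
  obtain ⟨hlow, hhigh⟩ := dualBase_height_bounds hw hg
  have hheight : dot3 (((Mmat i)ᵀ)⁻¹ *ᵥ f.1 + g.1) (MmatR i *ᵥ w)
      = dot3 f.1 w + dot3 g.1 (MmatR i *ᵥ w) := by
    rw [dot3_add, MmatR, dot3_map_mulVec, Mmat_transpose_mulVec_inv_mulVec]
  obtain ⟨hf0, hf1⟩ := hf
  simp only [stepped, Set.mem_ofPred]
  constructor <;> linarith

lemma MmatR_mulVec_mem_triangleCone {w : R3} (hw : w ∈ triangleCone) (i : Fin 3) :
    MmatR i *ᵥ w ∈ triangleCone := by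
  obtain ⟨h01, h12, h20⟩ := hw
  fin_cases i <;>
    simp only [triangleCone, Set.mem_ofPred, Fin.zero_eta, Fin.mk_one, Fin.reduceFinMk,
      MmatR_zero_mulVec, MmatR_one_mulVec, MmatR_two_mulVec, cons_val_zero, cons_val_one,
      cons_val_two, head_cons, tail_cons] <;>
    and_intros <;> linarith

lemma translate_mem_stepped_iff {v : R3} {x t : Z3} {s : Fin 3} :
    (x + t, s) ∈ stepped v ↔ 0 ≤ dot3 x v + dot3 t v ∧ dot3 x v + dot3 t v < v s := by
  rw [stepped, Set.mem_ofPred, dot3_add]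

lemma translatePat_pair_subset_stepped_iff {v : R3} {t a b : Z3} {s s' : Fin 3} :
    translatePat t {(a, s), (b, s')} ⊆ stepped v ↔
      0 ≤ dot3 a v + dot3 t v ∧ dot3 a v + dot3 t v < v s ∧
      0 ≤ dot3 b v + dot3 t v ∧ dot3 b v + dot3 t v < v s' := by
  simp only [translatePat, Set.image_insert_eq, Set.image_singleton, Set.insert_subset_iff,
    Set.singleton_subset_iff, translate_mem_stepped_iff, and_assoc]

theorem not_translate_forbidden_subset_stepped {v : R3} (hv : v ∈ triangleCone) :
    ∀ X ∈ Forbidden, ∀ t : Z3, ¬ translatePat t X ⊆ stepped v := by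
  obtain ⟨h01, h12, h20⟩ := hv
  intro X hX t hsub
  simp only [Forbidden, Set.mem_insert_iff, Set.mem_singleton_iff] at hX
  rcases hX with rfl | rfl | rfl | rfl <;>
    rw [translatePat_pair_subset_stepped_iff] at hsub <;>
    generalize dot3 t v = c at hsub <;>
    simp only [dot3_eq, Pi.zero_apply, cons_val_zero, cons_val_one, cons_val_two, head_cons,
      tail_cons, Int.cast_zero, Int.cast_one, zero_mul, one_mul, add_zero, zero_add] at hsub <;>
    linarith

theorem mem_triangleCone_of_forbidden_free {w : R3} (hw : ∀ j, 0 ≤ w j)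
    (h : ∀ X ∈ Forbidden, ∀ t : Z3, ¬ translatePat t X ⊆ stepped w) : w ∈ triangleCone := by
  refine ⟨not_lt.mp fun hlt => h {(0, 0), (![0,1,0], 0)} (by simp [Forbidden]) 0 ?_,
    not_lt.mp fun hlt => h {(0, 1), (![0,0,1], 1)} (by simp [Forbidden]) 0 ?_,
    not_lt.mp fun hlt => h {(0, 2), (![1,1,0], 2)} (by simp [Forbidden]) 0 ?_⟩
  all_goals
    simp only [translatePat_pair_subset_stepped_iff, dot3_eq, Pi.zero_apply, cons_val_zero,
      cons_val_one, cons_val_two, head_cons, tail_cons, Int.cast_zero, Int.cast_one, zero_mul,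
      one_mul, add_zero, zero_add]
    and_intros <;> linarith [hw 0, hw 1, hw 2]

/-- If a stepped plane `Γ_w` contains no translate of a forbidden
pattern, then neither does `Σᵢ(Γ_w)`. -/
theorem forbidden_avoided_by_image (w : R3) (hw : ∀ i, 0 ≤ w i)
    (h : ∀ X ∈ Forbidden, ∀ t : Z3, ¬ translatePat t X ⊆ stepped w) (i : Fin 3) :
    ∀ X ∈ Forbidden, ∀ t : Z3, ¬ translatePat t X ⊆ dualPat i (stepped w) := by
  intro X hX t hsub
  have hcone := MmatR_mulVec_mem_triangleCone (mem_triangleCone_of_forbidden_free hw h) i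
  exact not_translate_forbidden_subset_stepped hcone X hX t
    (hsub.trans (dualPat_stepped_subset hw i))

end
end
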